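/- arXiv:1203.6399 — 3 statements merged into one kernel-verified Lean document; each statement's English description precedes it below -/
import Mathlib

section
/- For all integers k, m ≥ 1 and all x ∈ ℝ, one has Σ_{j=0}^{max(k,m)} [q·C(k,j) + (-1)^j·C(m,j)] · Ẽ_{k+m-j}(x) = [2]_q · x^k · (x-1)^m, where C(n,j) denotes the binomial coefficient (equal to 0 when j > n). -/
/-!
Let `L` be the linear functional on polynomials with `L (X ^ n) = Ẽₙ`. The recurrence defining the
q-Euler numbers says exactly that `q L(p(X + 1)) + L(p) = [2]_q p(0)` for every polynomial `p`, and
`Ẽₙ(x) = L((X + x) ^ n)`. Expanding `(Y + 1)ᵏ Yᵐ` and `Yᵏ (Y - 1)ᵐ` binomially at `Y = X + x`, the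
left-hand side becomes `q L(p(X + 1)) + L(p)` for `p = (X + x)ᵏ (X + x - 1)ᵐ`, and `p(0) = xᵏ (x - 1)ᵐ`.
-/

open Finset Polynomial

section BinomialSums

variable {R A : Type*} [CommRing R] [CommRing A] [Algebra R A]

theorem sum_choose_smul_pow_eq_add_one_pow_mul_pow (Y : A) {k N : ℕ} (hkN : k ≤ N) (m : ℕ) :
    ∑ j ∈ range (N + 1), (k.choose j : R) • Y ^ (k + m - j) = (Y + 1) ^ k * Y ^ m := by
  rw [← sum_subset (range_subset_range.mpr (Nat.succ_le_succ hkN)) fun j _ hj => by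
      rw [Nat.choose_eq_zero_of_lt (by simpa using hj), Nat.cast_zero, zero_smul],
    add_comm Y, add_pow, sum_mul]
  refine sum_congr rfl fun j hj => ?_
  have hjk : k + m - j = k - j + m := by have := mem_range.mp hj; omega
  rw [hjk, pow_add, Nat.cast_smul_eq_nsmul, nsmul_eq_mul, one_pow, one_mul]
  ring

theorem sum_neg_one_pow_mul_choose_smul_pow_eq_pow_mul_sub_one_pow (Y : A) {m N : ℕ}
    (hmN : m ≤ N) (k : ℕ) :
    ∑ j ∈ range (N + 1), ((-1) ^ j * m.choose j : R) • Y ^ (k + m - j) = Y ^ k * (Y - 1) ^ m := by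
  rw [← sum_subset (range_subset_range.mpr (Nat.succ_le_succ hmN)) fun j _ hj => by
      rw [Nat.choose_eq_zero_of_lt (by simpa using hj), Nat.cast_zero, mul_zero, zero_smul],
    sub_eq_neg_add, add_pow, mul_sum]
  refine sum_congr rfl fun j hj => ?_
  have hjm : k + m - j = m - j + k := by have := mem_range.mp hj; omega
  rw [hjm, pow_add, Algebra.smul_def, map_mul, map_pow, map_neg, map_one, map_natCast]
  ring

end BinomialSums

section Umbral

variable {R : Type*} [CommRing R]

noncomputable def umbral (E : ℕ → R) : R[X] →ₗ[R] R :=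
  lsum fun n => LinearMap.smulRight LinearMap.id (E n)

variable (E : ℕ → R)

theorem umbral_monomial (n : ℕ) (a : R) : umbral E (monomial n a) = a * E n := by
  simp [umbral, lsum_apply, sum_monomial_index]

theorem umbral_C_mul_X_pow (a : R) (n : ℕ) : umbral E (C a * X ^ n) = a * E n := by
  rw [C_mul_X_pow_eq_monomial, umbral_monomial]

theorem umbral_X_add_one_pow (n : ℕ) :
    umbral E ((X + 1) ^ n) = ∑ j ∈ range (n + 1), (n.choose j : R) * E j := by
  rw [add_pow, map_sum]
  refine sum_congr rfl fun j _ => ?_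
  rw [one_pow, mul_one, ← C_eq_natCast, mul_comm, umbral_C_mul_X_pow]

theorem umbral_X_add_C_pow (x : R) (n : ℕ) :
    umbral E ((X + C x) ^ n) = ∑ l ∈ range (n + 1), (n.choose l : R) * E (n - l) * x ^ l := by
  rw [add_comm, add_pow, map_sum]
  refine sum_congr rfl fun l _ => ?_
  rw [← C_pow, ← C_eq_natCast, mul_comm, ← mul_assoc, ← C_mul, umbral_C_mul_X_pow]
  ring

theorem umbral_comp_X_add_one {q : R} (hE0 : E 0 = 1)
    (hE : ∀ n : ℕ, 1 ≤ n → q * ∑ j ∈ range (n + 1), (n.choose j : R) * E j + E n = 0)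
    (p : R[X]) :
    q * umbral E (p.comp (X + 1)) + umbral E p = (1 + q) * p.coeff 0 := by
  induction p using Polynomial.induction_on' with
  | add p r hp hr =>
    rw [add_comp, map_add, map_add, coeff_add]
    linear_combination hp + hr
  | monomial n a =>
    rw [monomial_comp, umbral_monomial, coeff_monomial, ← smul_eq_C_mul, map_smul,
      umbral_X_add_one_pow, smul_eq_mul]
    rcases Nat.eq_zero_or_pos n with rfl | hn
    · rw [if_pos rfl, zero_add, range_one, sum_singleton, Nat.choose_self, Nat.cast_one, one_mul,
        hE0]
      ring
    · rw [if_neg hn.ne']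
      linear_combination a * hE n hn

end Umbral

theorem stmt_0_general (q : ℝ)
    (E : ℕ → ℝ) (hE0 : E 0 = 1)
    (hE : ∀ n : ℕ, 1 ≤ n →
      q * ∑ j ∈ range (n + 1), (n.choose j : ℝ) * E j + E n = 0)
    (Ep : ℕ → ℝ → ℝ)
    (hEp : ∀ (n : ℕ) (x : ℝ),
      Ep n x = ∑ l ∈ range (n + 1), (n.choose l : ℝ) * E (n - l) * x ^ l)
    (k m : ℕ) (x : ℝ) :
    ∑ j ∈ range (max k m + 1),
      (q * (k.choose j : ℝ) + (-1 : ℝ) ^ j * (m.choose j : ℝ)) * Ep (k + m - j) x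
    = (1 + q) * x ^ k * (x - 1) ^ m := by
  set Y : ℝ[X] := X + C x
  set p : ℝ[X] := Y ^ k * (Y - 1) ^ m
  have hshift : p.comp (X + 1) = (Y + 1) ^ k * Y ^ m := by
    simp only [p, Y, mul_comp, pow_comp, sub_comp, add_comp, X_comp, C_comp, one_comp]
    ring
  have hconst : p.coeff 0 = x ^ k * (x - 1) ^ m := by
    simp [p, Y, coeff_zero_eq_eval_zero]
  calc _ = umbral E (q • ∑ j ∈ range (max k m + 1), (k.choose j : ℝ) • Y ^ (k + m - j)
          + ∑ j ∈ range (max k m + 1), ((-1) ^ j * m.choose j : ℝ) • Y ^ (k + m - j)) := by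
        simp only [hEp, ← umbral_X_add_C_pow, smul_sum, ← sum_add_distrib, map_sum, map_add,
          map_smul, smul_eq_mul]
        exact sum_congr rfl fun j _ => by ring
    _ = q * umbral E (p.comp (X + 1)) + umbral E p := by
        rw [sum_choose_smul_pow_eq_add_one_pow_mul_pow Y (le_max_left k m),
          sum_neg_one_pow_mul_choose_smul_pow_eq_pow_mul_sub_one_pow Y (le_max_right k m),
          hshift, map_add, map_smul, smul_eq_mul]
    _ = (1 + q) * x ^ k * (x - 1) ^ m := by
        rw [umbral_comp_X_add_one E hE0 hE, hconst, mul_assoc]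

theorem stmt_0 (q : ℝ) (hq0 : q ≠ 0) (hq1 : q ≠ -1)
    (E : ℕ → ℝ) (hE0 : E 0 = 1)
    (hE : ∀ n : ℕ, 1 ≤ n →
      q * ∑ j ∈ range (n + 1), (n.choose j : ℝ) * E j + E n = 0)
    (Ep : ℕ → ℝ → ℝ)
    (hEp : ∀ (n : ℕ) (x : ℝ),
      Ep n x = ∑ l ∈ range (n + 1), (n.choose l : ℝ) * E (n - l) * x ^ l)
    (k m : ℕ) (hk : 1 ≤ k) (hm : 1 ≤ m) (x : ℝ) :
    ∑ j ∈ range (max k m + 1),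
      (q * (k.choose j : ℝ) + (-1 : ℝ) ^ j * (m.choose j : ℝ)) * Ep (k + m - j) x
    = (1 + q) * x ^ k * (x - 1) ^ m :=
  stmt_0_general q E hE0 hE Ep hEp k m x
end

section
/- For every integer k ≥ 1, one has Σ_{j=1}^{k+1} [q·C(k,j) + (-1)^j·C(k+1,j)] · Ẽ_{2k+2-j}/(2k+2-j) = q·(-1)^k / ((2k+2)·C(2k+1,k)) − [2]_q · Ẽ_{2k+2}/(2k+2), where C(n,j) denotes the binomial coefficient (equal to 0 when j > n). -/
/-!
Let `L` be the umbral evaluation `X ^ n ↦ Ẽ_n`. The defining recurrence says precisely that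
`q L(p(X + 1)) + L(p) = [2]_q p(0)` for every polynomial `p`. Apply this to
`A(X) = ∫₀^X t^k (t - 1)^(k+1) dt`, which vanishes at `0`: since
`A(X + 1) = ∫₀^X (t + 1)^k t^(k+1) dt + A(1)`, the umbral value of
`∫₀^X (q t^(k+1) (t + 1)^k + t^k (t - 1)^(k+1)) dt` is `-q A(1)`. Expanding the integrand
binomially, that umbral value is the left-hand side plus `[2]_q Ẽ_{2k+2} / (2k+2)`, while
`A(1) = (-1)^(k+1) k! (k+1)! / (2k+2)!` is a beta integral.
-/

open Finset Polynomial Nat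

section Umbral

variable {R : Type*} [CommRing R]

noncomputable def umbralEval (E : ℕ → R) : R[X] →ₗ[R] R :=
  lsum fun n => LinearMap.mulRight R (E n)

theorem umbralEval_C_mul_X_pow (E : ℕ → R) (n : ℕ) (a : R) :
    umbralEval E (C a * X ^ n) = a * E n := by
  simp [umbralEval, C_mul_X_pow_eq_monomial, sum_monomial_index]

theorem umbralEval_C (E : ℕ → R) (a : R) : umbralEval E (C a) = a * E 0 := by
  simpa using umbralEval_C_mul_X_pow E 0 a

theorem umbralEval_X_pow (E : ℕ → R) (n : ℕ) : umbralEval E (X ^ n) = E n := by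
  simpa using umbralEval_C_mul_X_pow E n 1

theorem umbralEval_X_add_one_pow (E : ℕ → R) (n : ℕ) :
    umbralEval E ((X + 1) ^ n) = ∑ m ∈ range (n + 1), (n.choose m : R) * E m := by
  rw [add_pow, map_sum]
  refine sum_congr rfl fun m _ => ?_
  rw [one_pow, mul_one, ← C_eq_natCast, mul_comm, umbralEval_C_mul_X_pow]

theorem umbralEval_comp_X_add_one (q : R) (E : ℕ → R) (hE0 : E 0 = 1)
    (hE : ∀ n : ℕ, 1 ≤ n → q * ∑ j ∈ range (n + 1), (n.choose j : R) * E j + E n = 0)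
    (p : R[X]) : q * umbralEval E (p.comp (X + 1)) + umbralEval E p = (1 + q) * p.eval 0 := by
  induction p using Polynomial.induction_on' with
  | add p p' hp hp' =>
    rw [add_comp, map_add, map_add, eval_add]
    linear_combination hp + hp'
  | monomial n a =>
    rw [← C_mul_X_pow_eq_monomial, mul_comp, C_comp, X_pow_comp, C_mul', C_mul', map_smul,
      map_smul, umbralEval_X_add_one_pow, smul_eq_mul, smul_eq_mul, eval_smul, eval_X_pow,
      smul_eq_mul, umbralEval_X_pow]
    rcases Nat.eq_zero_or_pos n with rfl | hn
    · rw [zero_add, sum_range_one, Nat.choose_self, Nat.cast_one, one_mul, hE0, pow_zero]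
      ring
    · rw [zero_pow hn.ne']
      linear_combination a * hE n hn

theorem X_pow_mul_X_add_one_pow (a b : ℕ) :
    (X ^ a * (X + 1) ^ b : R[X]) = ∑ j ∈ range (b + 1), C (b.choose j : R) * X ^ (a + b - j) := by
  rw [add_comm, add_pow, mul_sum]
  refine sum_congr rfl fun j hj => ?_
  rw [mem_range] at hj
  rw [one_pow, one_mul, ← C_eq_natCast, show a + b - j = a + (b - j) by omega, pow_add]
  ring

theorem X_pow_mul_X_sub_one_pow (a b : ℕ) :
    (X ^ a * (X - 1) ^ b : R[X]) =
      ∑ j ∈ range (b + 1), C ((-1) ^ j * b.choose j : R) * X ^ (a + b - j) := by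
  rw [sub_eq_neg_add, add_pow, mul_sum]
  refine sum_congr rfl fun j hj => ?_
  rw [mem_range] at hj
  rw [← C_eq_natCast, show a + b - j = a + (b - j) by omega, pow_add, C_mul, C_pow, C_neg, C_1]
  ring

end Umbral

namespace Polynomial

section Antideriv

variable {K : Type*} [Field K]

noncomputable def antideriv : K[X] →ₗ[K] K[X] :=
  lsum fun n => (n + 1 : K)⁻¹ • monomial (n + 1)

theorem antideriv_monomial (n : ℕ) (a : K) :
    antideriv (monomial n a) = monomial (n + 1) (a / (n + 1)) := by
  simp [antideriv, sum_monomial_index, smul_monomial, div_eq_inv_mul]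

theorem antideriv_C_mul_X_pow (n : ℕ) (a : K) :
    antideriv (C a * X ^ n) = C (a / (n + 1)) * X ^ (n + 1) := by
  simp only [C_mul_X_pow_eq_monomial, antideriv_monomial]

theorem eval_zero_antideriv (p : K[X]) : (antideriv p).eval 0 = 0 := by
  induction p using Polynomial.induction_on' with
  | add p q hp hq => rw [map_add, eval_add, hp, hq, add_zero]
  | monomial n a => simp [antideriv_monomial]

theorem derivative_antideriv [CharZero K] (p : K[X]) : derivative (antideriv p) = p := by
  induction p using Polynomial.induction_on' with
  | add p q hp hq => rw [map_add, derivative_add, hp, hq]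
  | monomial n a =>
    rw [antideriv_monomial, derivative_monomial, add_tsub_cancel_right]
    push_cast
    rw [div_mul_cancel₀ _ (Nat.cast_add_one_ne_zero n)]

theorem antideriv_comp_X_add_one [CharZero K] (p : K[X]) :
    (antideriv p).comp (X + 1) = antideriv (p.comp (X + 1)) + C ((antideriv p).eval 1) := by
  set d := (antideriv p).comp (X + 1) - antideriv (p.comp (X + 1)) with hd_def
  have hd : derivative d = 0 := by
    simp [d, derivative_comp, derivative_antideriv]
  have hd0 : d.coeff 0 = (antideriv p).eval 1 := by
    simp [d, coeff_zero_eq_eval_zero, eval_zero_antideriv]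
  rw [← hd0, ← eq_C_of_derivative_eq_zero hd, hd_def, add_sub_cancel]

theorem eval_one_antideriv_X_pow_mul_X_sub_one_pow [CharZero K] (a b : ℕ) :
    (antideriv (X ^ a * (X - 1) ^ b : K[X])).eval 1 = (-1) ^ b * a ! * b ! / (a + b + 1)! := by
  induction b generalizing a with
  | zero =>
    rw [pow_zero, mul_one, ← one_mul (X ^ a), ← C_1, antideriv_C_mul_X_pow, eval_C_mul,
      eval_X_pow, one_pow, Nat.factorial_succ, Nat.factorial_zero]
    push_cast
    field_simp [Nat.cast_ne_zero.2 (Nat.factorial_ne_zero a)]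
  | succ b ih =>
    have hsplit : (X ^ a * (X - 1) ^ (b + 1) : K[X])
        = X ^ (a + 1) * (X - 1) ^ b - X ^ a * (X - 1) ^ b := by
      ring
    rw [hsplit, map_sub, eval_sub, ih, ih, show a + 1 + b + 1 = a + b + 1 + 1 by ring,
      show a + (b + 1) + 1 = a + b + 1 + 1 by ring, Nat.factorial_succ (a + b + 1),
      Nat.factorial_succ a, Nat.factorial_succ b]
    have hfac : ((a + b + 1)! : K) ≠ 0 := Nat.cast_ne_zero.2 (Nat.factorial_ne_zero _)
    have hsucc : (a + b + 1 + 1 : K) ≠ 0 := by exact_mod_cast Nat.succ_ne_zero (a + b + 1)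
    push_cast
    field_simp
    ring

end Antideriv

end Polynomial

theorem Nat.factorial_mul_factorial_div_factorial {K : Type*} [Field K] [CharZero K] (a b : ℕ) :
    (a ! * b ! / (a + b + 1)! : K) = (((a + b + 1 : ℕ) : K) * ((a + b).choose a : K))⁻¹ := by
  have h := Nat.choose_mul_factorial_mul_factorial (Nat.le_add_right a b)
  rw [Nat.add_sub_cancel_left] at h
  rw [Nat.factorial_succ, ← h]
  have hchoose : ((a + b).choose a : K) ≠ 0 := Nat.cast_ne_zero.2 (Nat.choose_pos (by omega)).ne'
  have hfa : (a ! : K) ≠ 0 := Nat.cast_ne_zero.2 (Nat.factorial_ne_zero a)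
  have hfb : (b ! : K) ≠ 0 := Nat.cast_ne_zero.2 (Nat.factorial_ne_zero b)
  push_cast
  field_simp

section UmbralAntideriv

variable {K : Type*} [Field K]

theorem umbralEval_antideriv_C_mul_X_pow (E : ℕ → K) (n : ℕ) (a : K) :
    umbralEval E (antideriv (C a * X ^ n)) = a * (E (n + 1) / (n + 1)) := by
  rw [antideriv_C_mul_X_pow, umbralEval_C_mul_X_pow]
  ring

theorem umbralEval_antideriv_expansion (q : K) (E : ℕ → K) (k : ℕ) :
    q * umbralEval E (antideriv (X ^ (k + 1) * (X + 1) ^ k))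
        + umbralEval E (antideriv (X ^ k * (X - 1) ^ (k + 1)))
      = (1 + q) * (E (2 * k + 2) / ((2 * k + 2 : ℕ) : K))
        + ∑ j ∈ Icc 1 (k + 1), (q * (k.choose j : K) + (-1) ^ j * ((k + 1).choose j : K)) *
          (E (2 * k + 2 - j) / ((2 * k + 2 - j : ℕ) : K)) := by
  have hdeg : ∀ j < k + 2, ((2 * k + 1 - j : ℕ) : K) + 1 = ((2 * k + 2 - j : ℕ) : K) := by
    intro j hj
    rw [← Nat.cast_add_one, show 2 * k + 1 - j + 1 = 2 * k + 2 - j by omega]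
  have hrange : ∑ j ∈ range (k + 2), (q * (k.choose j : K) + (-1) ^ j * ((k + 1).choose j : K)) *
      (E (2 * k + 2 - j) / ((2 * k + 2 - j : ℕ) : K))
      = q * umbralEval E (antideriv (X ^ (k + 1) * (X + 1) ^ k))
        + umbralEval E (antideriv (X ^ k * (X - 1) ^ (k + 1))) := by
    simp_rw [X_pow_mul_X_add_one_pow, X_pow_mul_X_sub_one_pow, map_sum,
      umbralEval_antideriv_C_mul_X_pow, mul_sum]
    rw [show k + 1 + k = 2 * k + 1 by ring, show k + (k + 1) = 2 * k + 1 by ring, sum_range_succ,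
      sum_range_succ _ (k + 1), ← add_assoc, ← sum_add_distrib]
    congr 1
    · refine sum_congr rfl fun j hj => ?_
      rw [mem_range] at hj
      rw [hdeg j (by omega), show 2 * k + 1 - j + 1 = 2 * k + 2 - j by omega]
      ring
    · rw [hdeg (k + 1) (by omega), show 2 * k + 1 - (k + 1) + 1 = 2 * k + 2 - (k + 1) by omega,
        Nat.choose_succ_self]
      ring
  rw [← hrange, sum_range_eq_add_Ico _ (by omega), show k + 2 = k + 1 + 1 from rfl,
    Ico_add_one_right_eq_Icc, Nat.choose_zero_right, Nat.choose_zero_right, pow_zero,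
    Nat.sub_zero]
  push_cast
  ring

end UmbralAntideriv

theorem stmt_2_general (q : ℝ)
    (E : ℕ → ℝ) (hE0 : E 0 = 1)
    (hE : ∀ n : ℕ, 1 ≤ n →
      q * ∑ j ∈ range (n + 1), (n.choose j : ℝ) * E j + E n = 0)
    (k : ℕ) :
    ∑ j ∈ Icc 1 (k + 1),
      (q * (k.choose j : ℝ) + (-1 : ℝ) ^ j * ((k + 1).choose j : ℝ)) *
        (E (2 * k + 2 - j) / ((2 * k + 2 - j : ℕ) : ℝ))
    = q * (-1 : ℝ) ^ k / (((2 * k + 2 : ℕ) : ℝ) * ((2 * k + 1).choose k : ℝ))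
      - (1 + q) * (E (2 * k + 2) / ((2 * k + 2 : ℕ) : ℝ)) := by
  have hcomp : (X ^ k * (X - 1) ^ (k + 1) : ℝ[X]).comp (X + 1) = X ^ (k + 1) * (X + 1) ^ k := by
    rw [mul_comp, X_pow_comp, pow_comp, sub_comp, X_comp, one_comp, add_sub_cancel_right, mul_comm]
  have hbalance := umbralEval_comp_X_add_one q E hE0 hE (antideriv (X ^ k * (X - 1) ^ (k + 1)))
  rw [antideriv_comp_X_add_one, hcomp, eval_zero_antideriv, map_add, umbralEval_C, hE0, mul_one,
    eval_one_antideriv_X_pow_mul_X_sub_one_pow, mul_assoc, mul_div_assoc,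
    Nat.factorial_mul_factorial_div_factorial, show k + (k + 1) = 2 * k + 1 by ring,
    mul_zero] at hbalance
  linear_combination hbalance - umbralEval_antideriv_expansion q E k

theorem stmt_2 (q : ℝ) (hq0 : q ≠ 0) (hq1 : q ≠ -1)
    (E : ℕ → ℝ) (hE0 : E 0 = 1)
    (hE : ∀ n : ℕ, 1 ≤ n →
      q * ∑ j ∈ range (n + 1), (n.choose j : ℝ) * E j + E n = 0)
    (k : ℕ) (hk : 1 ≤ k) :
    ∑ j ∈ Icc 1 (k + 1),
      (q * (k.choose j : ℝ) + (-1 : ℝ) ^ j * ((k + 1).choose j : ℝ)) *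
        (E (2 * k + 2 - j) / ((2 * k + 2 - j : ℕ) : ℝ))
    = q * (-1 : ℝ) ^ k / (((2 * k + 2 : ℕ) : ℝ) * ((2 * k + 1).choose k : ℝ))
      - (1 + q) * (E (2 * k + 2) / ((2 * k + 2 : ℕ) : ℝ)) :=
  stmt_2_general q E hE0 hE k
end

section
/- For all integers k, m ≥ 1, one has Σ_{j=0}^{max(k,m)} [q·C(k,j) + (−1)^j·C(m,j)] · Σ_{l=0}^{k+m-j} C(k+m−j,l)·Ẽ_{k+m-j-l}·Ẽ_l = [2]_q · Σ_{l=0}^{m} C(m,l)·(−1)^{m−l}·Ẽ_{l+k}, where C(n,j) denotes the binomial coefficient (equal to 0 when j > n). -/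
/-!
Let `I = moment E` be the linear functional on polynomials with `I (X ^ n) = E n`. The recurrence
says exactly that `q I(P(X + 1)) + I(P) = (1 + q) P(0)` for every polynomial `P`. Applied to
`y ↦ H(x + y)` this shows that the polynomial `x ↦ I_y(q H(x + y + 1) + H(x + y))` is `(1 + q) H`.
For `H = X ^ k (X - 1) ^ m` one has `q H(X + 1) + H = ∑ⱼ (q C(k,j) + (-1)ʲ C(m,j)) X ^ (k + m - j)`,
and applying `I` once more gives the identity, since the inner sums on the left are
`I_x I_y (x + y) ^ (k + m - j)`.
-/

open Finset Polynomial

section Moment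

variable {R : Type*} [CommRing R] (E : ℕ → R)

noncomputable def moment : R[X] →ₗ[R] R :=
  lsum fun n => LinearMap.toSpanSingleton R R (E n)

/-- The polynomial `x ↦ moment E (P.comp (X + C x))`. -/
noncomputable def momentShift : R[X] →ₗ[R] R[X] :=
  lsum fun n => LinearMap.toSpanSingleton R R[X]
    (∑ i ∈ range (n + 1), C ((n.choose i : R) * E i) * X ^ (n - i))

theorem moment_C_mul_X_pow (a : R) (n : ℕ) : moment E (C a * X ^ n) = a * E n := by
  simp [moment, C_mul_X_pow_eq_monomial, smul_eq_mul]

theorem moment_X_pow_mul_X_add_C_pow (b a : ℕ) (c : R) :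
    moment E (X ^ b * (X + C c) ^ a) =
      ∑ j ∈ range (a + 1), (a.choose j : R) * c ^ (a - j) * E (j + b) := by
  rw [add_pow, mul_sum, map_sum]
  refine sum_congr rfl fun j _ => ?_
  rw [show X ^ b * (X ^ j * C c ^ (a - j) * (a.choose j : R[X])) =
      C ((a.choose j : R) * c ^ (a - j)) * X ^ (j + b) by
    rw [C_mul, C_pow, C_eq_natCast]; ring, moment_C_mul_X_pow]

theorem moment_X_pow (n : ℕ) : moment E (X ^ n) = E n := by
  simpa using moment_C_mul_X_pow E 1 n

theorem moment_X_add_C_pow (n : ℕ) (c : R) :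
    moment E ((X + C c) ^ n) = ∑ j ∈ range (n + 1), (n.choose j : R) * c ^ (n - j) * E j := by
  simpa using moment_X_pow_mul_X_add_C_pow E 0 n c

theorem momentShift_X_pow (n : ℕ) :
    momentShift E (X ^ n) = ∑ i ∈ range (n + 1), C ((n.choose i : R) * E i) * X ^ (n - i) := by
  simp [momentShift, ← monomial_one_right_eq_X_pow]

theorem moment_momentShift_X_pow (n : ℕ) :
    moment E (momentShift E (X ^ n)) = ∑ l ∈ range (n + 1), (n.choose l : R) * E (n - l) * E l := by
  rw [momentShift_X_pow, map_sum]
  refine sum_congr rfl fun l _ => ?_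
  rw [moment_C_mul_X_pow]
  ring

theorem eval_momentShift (P : R[X]) (x : R) :
    (momentShift E P).eval x = moment E (taylor x P) := by
  induction P using Polynomial.induction_on' with
  | add P Q hP hQ => rw [map_add, eval_add, hP, hQ, map_add, map_add]
  | monomial n a =>
    rw [← smul_X_eq_monomial, map_smul, eval_smul, momentShift_X_pow, map_smul, map_smul,
      taylor_X_pow, moment_X_add_C_pow, eval_finsetSum]
    simp only [eval_mul, eval_C, eval_pow, eval_X]
    congr 1
    refine sum_congr rfl fun i _ => ?_
    ring

variable {E} {q : R} (hE0 : E 0 = 1)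
  (hE : ∀ n : ℕ, 1 ≤ n → q * ∑ j ∈ range (n + 1), (n.choose j : R) * E j + E n = 0)
include hE0 hE

theorem moment_comp_X_add_one (P : R[X]) :
    q * moment E (P.comp (X + 1)) + moment E P = (1 + q) * P.eval 0 := by
  induction P using Polynomial.induction_on' with
  | add P Q hP hQ =>
    simp only [add_comp, map_add, eval_add]
    linear_combination hP + hQ
  | monomial n a =>
    have hX : moment E ((X + 1) ^ n) = ∑ j ∈ range (n + 1), (n.choose j : R) * E j := by
      simpa using moment_X_add_C_pow E n 1
    rw [← smul_X_eq_monomial]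
    simp only [smul_comp, X_pow_comp, map_smul, eval_smul, eval_pow, eval_X, smul_eq_mul, hX,
      moment_X_pow]
    rcases Nat.eq_zero_or_pos n with rfl | hn
    · rw [sum_range_one, Nat.choose_self, Nat.cast_one, hE0, pow_zero]
      ring
    · rw [zero_pow hn.ne']
      linear_combination a * hE n hn

theorem momentShift_smul_comp_X_add_one_add [IsDomain R] [Infinite R] (P : R[X]) :
    momentShift E (q • P.comp (X + 1) + P) = (1 + q) • P := by
  refine Polynomial.funext fun x => ?_
  have htaylor : taylor x (P.comp (X + 1)) = (taylor x P).comp (X + 1) := by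
    simp only [taylor_apply, comp_assoc, add_comp, X_comp, C_comp, one_comp]
    ring_nf
  rw [eval_momentShift, map_add, map_add, map_smul, map_smul, htaylor, smul_eq_mul,
    moment_comp_X_add_one hE0 hE, eval_smul, smul_eq_mul, taylor_eval, zero_add]

end Moment

section Coefficients

variable {R : Type*} [CommRing R]

theorem sum_range_choose_mul_pow_smul_X_pow {N a : ℕ} (b : ℕ) (c : R) (h : a < N) :
    ∑ j ∈ range N, ((a.choose j : R) * c ^ j) • (X : R[X]) ^ (a + b - j) = X ^ b * (X + C c) ^ a := by
  rw [← sum_subset (range_subset_range.2 h) fun j _ hj => ?_, add_comm X, add_pow, mul_sum]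
  · refine sum_congr rfl fun j hj => ?_
    have hja : j ≤ a := Nat.lt_succ_iff.1 (mem_range.1 hj)
    rw [show a + b - j = b + (a - j) by omega, pow_add, smul_eq_C_mul, C_mul, C_pow, C_eq_natCast]
    ring
  · rw [Nat.choose_eq_zero_of_lt (by rw [mem_range] at hj; omega), Nat.cast_zero, zero_mul, zero_smul]

theorem sum_range_max_choose_smul_X_pow (q : R) (k m : ℕ) :
    ∑ j ∈ range (max k m + 1),
      (q * (k.choose j : R) + (-1 : R) ^ j * (m.choose j : R)) • (X : R[X]) ^ (k + m - j) =
      q • ((X : R[X]) ^ k * (X + C (-1)) ^ m).comp (X + 1) + X ^ k * (X + C (-1)) ^ m := by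
  have hk := sum_range_choose_mul_pow_smul_X_pow m (1 : R) (show k < max k m + 1 by omega)
  have hm := sum_range_choose_mul_pow_smul_X_pow k (-1 : R) (show m < max k m + 1 by omega)
  have hcomp : ((X : R[X]) ^ k * (X + C (-1)) ^ m).comp (X + 1) = X ^ m * (X + C 1) ^ k := by
    simp only [mul_comp, pow_comp, add_comp, X_comp, C_neg, C_1, neg_comp, one_comp]
    ring
  rw [hcomp, ← hk, ← hm, smul_sum, ← sum_add_distrib, add_comm m k]
  refine sum_congr rfl fun j _ => ?_
  rw [one_pow, mul_one, smul_smul, ← add_smul, mul_comm _ ((-1 : R) ^ j)]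

end Coefficients

theorem stmt_9_general (q : ℝ)
    (E : ℕ → ℝ) (hE0 : E 0 = 1)
    (hE : ∀ n : ℕ, 1 ≤ n →
      q * ∑ j ∈ range (n + 1), (n.choose j : ℝ) * E j + E n = 0)
    (k m : ℕ) :
    ∑ j ∈ range (max k m + 1),
      (q * (k.choose j : ℝ) + (-1 : ℝ) ^ j * (m.choose j : ℝ)) *
        ∑ l ∈ range (k + m - j + 1),
          ((k + m - j).choose l : ℝ) * E (k + m - j - l) * E l
    = (1 + q) * ∑ l ∈ range (m + 1), (m.choose l : ℝ) * (-1 : ℝ) ^ (m - l) * E (l + k) := by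
  calc _ = moment E (momentShift E (∑ j ∈ range (max k m + 1),
        (q * (k.choose j : ℝ) + (-1 : ℝ) ^ j * (m.choose j : ℝ)) • (X : ℝ[X]) ^ (k + m - j))) := by
        simp only [map_sum, map_smul, moment_momentShift_X_pow, smul_eq_mul]
    _ = (1 + q) * moment E (X ^ k * (X + C (-1)) ^ m) := by
        rw [sum_range_max_choose_smul_X_pow, momentShift_smul_comp_X_add_one_add hE0 hE, map_smul,
          smul_eq_mul]
    _ = _ := by rw [moment_X_pow_mul_X_add_C_pow]

theorem stmt_9 (q : ℝ) (hq0 : q ≠ 0) (hq1 : q ≠ -1)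
    (E : ℕ → ℝ) (hE0 : E 0 = 1)
    (hE : ∀ n : ℕ, 1 ≤ n →
      q * ∑ j ∈ range (n + 1), (n.choose j : ℝ) * E j + E n = 0)
    (k m : ℕ) (hk : 1 ≤ k) (hm : 1 ≤ m) :
    ∑ j ∈ range (max k m + 1),
      (q * (k.choose j : ℝ) + (-1 : ℝ) ^ j * (m.choose j : ℝ)) *
        ∑ l ∈ range (k + m - j + 1),
          ((k + m - j).choose l : ℝ) * E (k + m - j - l) * E l
    = (1 + q) * ∑ l ∈ range (m + 1), (m.choose l : ℝ) * (-1 : ℝ) ^ (m - l) * E (l + k) :=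
  stmt_9_general q E hE0 hE k m
end
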